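/- Let F be a polynomial over ℤ in variables x_1,...,x_n that is a product of clauses, where 2m ≤ n and every monomial of F has degree exactly 2m. Let H = x_1 + ... + x_n and F' = F · H^{n-2m}. Then the only multilinear monomial of degree n that can appear in F' is ψ = x_1 x_2 ⋯ x_n, and its coefficient in F' equals S(F) · (n-2m)!, where S(F) is the sum of coefficients of all multilinear monomials of F. In particular, F has a multilinear monomial with positive coefficient if and only if the coefficient of ψ in F' is positive. -/

import Mathlib

/-!
`F` is homogeneous of degree `2m` and `H` of degree `1`, so `F'` is homogeneous of degree
`2m + (n - 2m) ≥ n`; a squarefree monomial in `n` variables has degree at most `n`, with equality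
only for `ψ`. For the coefficient, expand `F` into monomials: `x^d · H^k` contributes to `ψ` only
when `x^d ∣ ψ`, i.e. `d` is squarefree, and then with the coefficient of the squarefree monomial
`ψ / x^d` of degree `k = n - 2m` in `H^k`, the multinomial coefficient `k! / (1! ⋯ 1!) = k!`.
-/

namespace Finsupp

theorem multinomial_eq_factorial_degree {α : Type*} {f : α →₀ ℕ} (hf : ∀ a, f a ≤ 1) :
    f.multinomial = f.degree.factorial := by
  have h := Nat.multinomial_spec f.support f
  rw [Finset.prod_eq_one fun a _ => Nat.factorial_eq_one.mpr (hf a), one_mul] at h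
  rw [multinomial_eq, h, degree_apply]

variable {σ : Type*} [Fintype σ]

theorem sum_single_one_apply (i : σ) : (∑ j : σ, single j 1 : σ →₀ ℕ) i = 1 := by
  simp [finsetSum_apply]

theorem degree_sum_single_one : (∑ j : σ, single j 1 : σ →₀ ℕ).degree = Fintype.card σ := by
  simp [map_sum, degree_single]

theorem le_sum_single_one_iff {d : σ →₀ ℕ} : d ≤ ∑ j : σ, single j 1 ↔ ∀ i, d i ≤ 1 := by
  simp only [le_def, sum_single_one_apply]

theorem degree_sum_single_one_tsub {d : σ →₀ ℕ} (hd : ∀ i, d i ≤ 1) :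
    ((∑ j : σ, single j 1) - d).degree = Fintype.card σ - d.degree := by
  have := congrArg degree (tsub_add_cancel_of_le (le_sum_single_one_iff.mpr hd))
  rw [map_add, degree_sum_single_one] at this
  omega

theorem eq_sum_single_one_of_le_one {d : σ →₀ ℕ} (hd : ∀ i, d i ≤ 1)
    (hcard : Fintype.card σ ≤ d.degree) : d = ∑ j : σ, single j 1 := by
  refine le_antisymm (le_sum_single_one_iff.mpr hd) (tsub_eq_zero_iff_le.mp ?_)
  rw [← degree_eq_zero_iff, degree_sum_single_one_tsub hd]
  omega

end Finsupp

namespace MvPolynomial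

variable {σ R : Type*} [CommSemiring R]

theorem isHomogeneous_of_degree_eq {φ : MvPolynomial σ R} {n : ℕ}
    (h : ∀ d ∈ φ.support, d.degree = n) : φ.IsHomogeneous n := fun {d} hd => by
  change Finsupp.weight (fun _ => 1) d = n
  rw [← Finsupp.degree_eq_weight_one]
  exact h d (mem_support_iff.mpr hd)

variable [Fintype σ]

theorem coeff_sum_X_pow_of_le_one {e : σ →₀ ℕ} (he : ∀ i, e i ≤ 1) (k : ℕ) :
    coeff e ((∑ i, X i : MvPolynomial σ R) ^ k) =
      if e.degree = k then (k.factorial : R) else 0 := by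
  rw [coeff_sum_X_pow_of_fintype]
  change ((if e.degree = k then _ else 0 : ℕ) : R) = _
  split_ifs with h
  · rw [Finsupp.multinomial_eq_factorial_degree he, h]
  · exact Nat.cast_zero

theorem isHomogeneous_sum_X : (∑ i, X i : MvPolynomial σ R).IsHomogeneous 1 :=
  IsHomogeneous.sum _ _ _ fun i _ => isHomogeneous_X R i

theorem IsHomogeneous.eq_sum_single_one_of_coeff_ne_zero {φ : MvPolynomial σ R} {N : ℕ}
    (hφ : φ.IsHomogeneous N) (hN : Fintype.card σ ≤ N) {d : σ →₀ ℕ} (hd : coeff d φ ≠ 0)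
    (hle : ∀ i, d i ≤ 1) : d = ∑ j : σ, Finsupp.single j 1 := by
  have hdeg : d.degree = N := by_contra fun h => hd (hφ.coeff_eq_zero h)
  exact Finsupp.eq_sum_single_one_of_le_one hle (hdeg ▸ hN)

theorem IsHomogeneous.coeff_sum_single_one_mul_sum_X_pow {F : MvPolynomial σ R} {p : ℕ}
    [DecidablePred fun d : σ →₀ ℕ => ∀ j, d j ≤ 1] (hF : F.IsHomogeneous p) :
    coeff (∑ j : σ, Finsupp.single j 1) (F * (∑ i, X i) ^ (Fintype.card σ - p)) =
      (∑ d ∈ F.support.filter (fun d => ∀ j, d j ≤ 1), coeff d F) *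
        (Fintype.card σ - p).factorial := by
  conv_lhs => rw [F.as_sum, Finset.sum_mul, coeff_sum]
  rw [Finset.sum_filter, Finset.sum_mul]
  refine Finset.sum_congr rfl fun d hd => ?_
  rw [coeff_monomial_mul']
  by_cases hle : ∀ j, d j ≤ 1
  · have hsub : ∀ i, ((∑ j : σ, Finsupp.single j 1 : σ →₀ ℕ) - d) i ≤ 1 := fun i => by
      rw [Finsupp.tsub_apply, Finsupp.sum_single_one_apply]
      exact Nat.sub_le _ _
    have hdeg : ((∑ j : σ, Finsupp.single j 1) - d).degree = Fintype.card σ - p := by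
      rw [Finsupp.degree_sum_single_one_tsub hle, Finsupp.degree_apply,
        ← hF.degree_eq_sum_deg_support hd]
    rw [if_pos (Finsupp.le_sum_single_one_iff.mpr hle), if_pos hle,
      coeff_sum_X_pow_of_le_one hsub, if_pos hdeg]
  · rw [if_neg (mt Finsupp.le_sum_single_one_iff.mp hle), if_neg hle, zero_mul]

end MvPolynomial

open MvPolynomial

theorem amplification_to_full_monomial_general (n m : ℕ)
    (F : MvPolynomial (Fin n) ℤ)
    (hpos : ∀ d, 0 ≤ MvPolynomial.coeff d F)
    (hdeg : ∀ d ∈ F.support, (d.sum fun _ e => e) = 2 * m) :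
    let H : MvPolynomial (Fin n) ℤ := ∑ j : Fin n, X j
    let F' : MvPolynomial (Fin n) ℤ := F * H ^ (n - 2 * m)
    let ψ : Fin n →₀ ℕ := ∑ j : Fin n, Finsupp.single j 1
    (∀ d : Fin n →₀ ℕ, MvPolynomial.coeff d F' ≠ 0 → (∀ j, d j ≤ 1) → d = ψ) ∧
    MvPolynomial.coeff ψ F'
      = (∑ d ∈ F.support.filter (fun d => ∀ j, d j ≤ 1), MvPolynomial.coeff d F)
          * ((n - 2 * m).factorial : ℤ) ∧
    ((∃ d : Fin n →₀ ℕ, (∀ j, d j ≤ 1) ∧ 0 < MvPolynomial.coeff d F) ↔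
      0 < MvPolynomial.coeff ψ F') := by
  intro H F' ψ
  have hF : F.IsHomogeneous (2 * m) := isHomogeneous_of_degree_eq hdeg
  have hcoeff := hF.coeff_sum_single_one_mul_sum_X_pow
  rw [Fintype.card_fin] at hcoeff
  refine ⟨fun d hd hle => ?_, hcoeff, ?_⟩
  · exact (hF.mul (isHomogeneous_sum_X.pow _)).eq_sum_single_one_of_coeff_ne_zero
      (by rw [Fintype.card_fin]; omega) hd hle
  · rw [hcoeff, mul_pos_iff_of_pos_right (by positivity),
      Finset.sum_pos_iff_of_nonneg fun d _ => hpos d]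
    simp only [Finset.mem_filter, mem_support_iff, and_assoc]
    exact exists_congr fun d => ⟨fun ⟨hle, hd⟩ => ⟨hd.ne', hle, hd⟩, fun ⟨_, hle, hd⟩ => ⟨hle, hd⟩⟩

/-- Let `F` be a polynomial over `ℤ` in `n` variables with nonnegative coefficients
all of whose monomials have degree exactly `2m`, with `2m ≤ n`, and let
`F' = F * H^(n-2m)` with `H = x_1 + ⋯ + x_n`.  Then the only multilinear monomial
appearing in `F'` is `ψ = x_1 ⋯ x_n`, its coefficient is `S(F) * (n-2m)!` where
`S(F)` is the sum of the coefficients of the multilinear monomials of `F`, and `F`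
has a multilinear monomial with positive coefficient iff the coefficient of `ψ`
in `F'` is positive. -/
theorem amplification_to_full_monomial (n m : ℕ) (hmn : 2 * m ≤ n)
    (F : MvPolynomial (Fin n) ℤ)
    (hpos : ∀ d, 0 ≤ MvPolynomial.coeff d F)
    (hdeg : ∀ d ∈ F.support, (d.sum fun _ e => e) = 2 * m) :
    let H : MvPolynomial (Fin n) ℤ := ∑ j : Fin n, X j
    let F' : MvPolynomial (Fin n) ℤ := F * H ^ (n - 2 * m)
    let ψ : Fin n →₀ ℕ := ∑ j : Fin n, Finsupp.single j 1
    (∀ d : Fin n →₀ ℕ, MvPolynomial.coeff d F' ≠ 0 → (∀ j, d j ≤ 1) → d = ψ) ∧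
    MvPolynomial.coeff ψ F'
      = (∑ d ∈ F.support.filter (fun d => ∀ j, d j ≤ 1), MvPolynomial.coeff d F)
          * ((n - 2 * m).factorial : ℤ) ∧
    ((∃ d : Fin n →₀ ℕ, (∀ j, d j ≤ 1) ∧ 0 < MvPolynomial.coeff d F) ↔
      0 < MvPolynomial.coeff ψ F') :=
  amplification_to_full_monomial_general n m F hpos hdeg
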